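/- Let H be a symmetric positive definite m × m real matrix with all eigenvalues λ_1, ..., λ_m in (0, 1), let T : ℝ^m → ℝ^m be nonexpansive with a fixed point v*, and let c = min_j λ_j(1 − λ_j) > 0. Define v^{k+1} = (I − H) v^k + H T(v^k) starting from any v^1. Then for every k ≥ 1, ∑_{j=1}^k ‖v^j − T(v^j)‖²_{H^{-1}} ≤ (1/c) ‖v^1 − v*‖²_{H^{-1}}. -/

import Mathlib

/-!
With `a = v j - v*` and the residual `r = v j - T (v j)`, one step reads `v (j+1) - v* = a - H r`,
so `‖a - H r‖²_{H⁻¹} = ‖a‖²_{H⁻¹} - 2⟪a, r⟫ + ⟪r, H r⟫`. Nonexpansiveness of `T` against the fixed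
point gives `‖r‖² ≤ 2⟪a, r⟫`, and in an eigenbasis of `H` the condition `c ≤ λ(1 - λ)` becomes
`λ + c/λ ≤ 1`, i.e. `⟪r, H r⟫ + c‖r‖²_{H⁻¹} ≤ ‖r‖²`. So each step lowers `‖v j - v*‖²_{H⁻¹}` by at
least `c‖r‖²_{H⁻¹}`, and the sum telescopes.
-/

/-- The weighted squared norm `‖v‖²_{H⁻¹} = vᵀ H⁻¹ v` associated with a symmetric positive
definite matrix `H`. -/
noncomputable def wnormSq {m : ℕ} (H : Matrix (Fin m) (Fin m) ℝ)
    (v : EuclideanSpace ℝ (Fin m)) : ℝ :=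
  inner ℝ v (Matrix.toEuclideanLin H⁻¹ v)

open Finset RealInnerProductSpace

section InnerProductSpace

variable {E : Type*} [NormedAddCommGroup E] [InnerProductSpace ℝ E]

theorem norm_sq_le_two_mul_inner_of_norm_sub_le {a r : E} (h : ‖a - r‖ ≤ ‖a‖) :
    ‖r‖ ^ 2 ≤ 2 * ⟪a, r⟫ := by
  have hsq := pow_le_pow_left₀ (norm_nonneg _) h 2
  rw [norm_sub_sq_real] at hsq
  linarith

theorem LinearMap.IsSymmetric.inner_sub_apply_sub_of_leftInverse {P Q : E →ₗ[ℝ] E}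
    (hQ : Q.IsSymmetric) (hQP : ∀ x, Q (P x) = x) (a r : E) :
    ⟪a - P r, Q (a - P r)⟫ = ⟪a, Q a⟫ - 2 * ⟪a, r⟫ + ⟪r, P r⟫ := by
  have hcross : ⟪P r, Q a⟫ = ⟪a, r⟫ := by rw [← hQ, hQP, real_inner_comm]
  simp only [map_sub, hQP, inner_sub_left, inner_sub_right, hcross, real_inner_comm (P r) r]
  ring

theorem preconditioned_step_descent {P Q : E →ₗ[ℝ] E} (hQ : Q.IsSymmetric)
    (hQP : ∀ x, Q (P x) = x) {c : ℝ} (hPQ : ∀ r, ⟪r, P r⟫ + c * ⟪r, Q r⟫ ≤ ‖r‖ ^ 2)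
    {T : E → E} (hT : ∀ x y, ‖T x - T y‖ ≤ ‖x - y‖) {y : E} (hy : T y = y) (x : E) :
    ⟪x - P (x - T x) - y, Q (x - P (x - T x) - y)⟫ + c * ⟪x - T x, Q (x - T x)⟫ ≤
      ⟪x - y, Q (x - y)⟫ := by
  have hres : ‖x - T x‖ ^ 2 ≤ 2 * ⟪x - y, x - T x⟫ := by
    refine norm_sq_le_two_mul_inner_of_norm_sub_le ?_
    simpa only [sub_sub_sub_cancel_left, hy] using hT x y
  rw [sub_right_comm, hQ.inner_sub_apply_sub_of_leftInverse hQP]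
  linarith [hPQ (x - T x)]

end InnerProductSpace

section Eigenbasis

variable {ι E : Type*} [Fintype ι] [NormedAddCommGroup E] [InnerProductSpace ℝ E]
  (B : OrthonormalBasis ι ℝ E)

theorem OrthonormalBasis.repr_apply_of_apply_eq_smul {f : E →ₗ[ℝ] E} {μ : ι → ℝ}
    (hf : ∀ i, f (B i) = μ i • B i) (x : E) (i : ι) :
    B.repr (f x) i = μ i * B.repr x i := by
  classical
  conv_lhs => rw [← B.sum_repr x]
  simp [hf, B.repr_self, Pi.single_apply, mul_comm]

theorem OrthonormalBasis.inner_apply_self_of_apply_eq_smul {f : E →ₗ[ℝ] E} {μ : ι → ℝ}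
    (hf : ∀ i, f (B i) = μ i • B i) (x : E) :
    ⟪x, f x⟫ = ∑ i, μ i * B.repr x i ^ 2 := by
  rw [← B.repr.inner_map_map, PiLp.inner_apply]
  refine sum_congr rfl fun i _ => ?_
  rw [B.repr_apply_of_apply_eq_smul hf]
  simp only [RCLike.inner_apply, conj_trivial]
  ring

theorem OrthonormalBasis.inner_add_mul_inner_le_norm_sq {f g : E →ₗ[ℝ] E} {μ ν : ι → ℝ}
    (hf : ∀ i, f (B i) = μ i • B i) (hg : ∀ i, g (B i) = ν i • B i) {c : ℝ}
    (hμν : ∀ i, μ i + c * ν i ≤ 1) (x : E) :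
    ⟪x, f x⟫ + c * ⟪x, g x⟫ ≤ ‖x‖ ^ 2 := by
  have hid : ⟪x, LinearMap.id x⟫ = ∑ i, 1 * B.repr x i ^ 2 :=
    B.inner_apply_self_of_apply_eq_smul (fun i => (one_smul ℝ (B i)).symm) x
  rw [LinearMap.id_apply, real_inner_self_eq_norm_sq] at hid
  rw [hid, B.inner_apply_self_of_apply_eq_smul hf, B.inner_apply_self_of_apply_eq_smul hg,
    mul_sum, ← sum_add_distrib]
  refine sum_le_sum fun i _ => ?_
  nlinarith [mul_le_mul_of_nonneg_right (hμν i) (sq_nonneg (B.repr x i))]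

end Eigenbasis

section Matrix

variable {n : Type*} [Fintype n] [DecidableEq n] {A : Matrix n n ℝ}

theorem Matrix.IsHermitian.toEuclideanLin_eigenvectorBasis (hA : A.IsHermitian) (i : n) :
    toEuclideanLin A (hA.eigenvectorBasis i) = hA.eigenvalues i • hA.eigenvectorBasis i := by
  apply (WithLp.equiv 2 (n → ℝ)).injective
  simpa using hA.mulVec_eigenvectorBasis i

theorem Matrix.toEuclideanLin_inv_apply_toEuclideanLin (hA : IsUnit A.det)
    (x : EuclideanSpace ℝ n) : toEuclideanLin A⁻¹ (toEuclideanLin A x) = x := by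
  rw [← LinearMap.comp_apply, ← toLpLin_mul_same, nonsing_inv_mul _ hA, toLpLin_one]
  rfl

theorem Matrix.PosDef.toEuclideanLin_inv_eigenvectorBasis (hA : A.PosDef) (i : n) :
    toEuclideanLin A⁻¹ (hA.1.eigenvectorBasis i) =
      (hA.1.eigenvalues i)⁻¹ • hA.1.eigenvectorBasis i := by
  have hAinv : toEuclideanLin A ((hA.1.eigenvalues i)⁻¹ • hA.1.eigenvectorBasis i) =
      hA.1.eigenvectorBasis i := by
    rw [map_smul, hA.1.toEuclideanLin_eigenvectorBasis, smul_smul,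
      inv_mul_cancel₀ (hA.eigenvalues_pos i).ne', one_smul]
  conv_lhs => rw [← hAinv]
  exact toEuclideanLin_inv_apply_toEuclideanLin hA.det_pos.ne'.isUnit _

end Matrix

theorem sum_Icc_le_one_div_mul_of_descent {e r : ℕ → ℝ} {c : ℝ} (hc : 0 < c)
    (he : ∀ j, 0 ≤ e j) (hstep : ∀ j, 1 ≤ j → e (j + 1) + c * r j ≤ e j) (k : ℕ) :
    ∑ j ∈ Icc 1 k, r j ≤ 1 / c * e 1 := by
  have htele : c * ∑ j ∈ Icc 1 k, r j + e (k + 1) ≤ e 1 := by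
    induction k with
    | zero => simp
    | succ n ih =>
      rw [sum_Icc_succ_top (by omega), mul_add]
      linarith [hstep (n + 1) (by omega)]
  rw [one_div_mul_eq_div, le_div_iff₀ hc]
  linarith [he (k + 1)]

/-- Let `H` be a symmetric positive definite `m × m` real matrix with all
eigenvalues `λ_j ∈ (0,1)`, let `T` be nonexpansive with fixed point `v*`, and let
`c = min_j λ_j (1 − λ_j) > 0`.  For the iteration `v (k+1) = (I − H) v k + H T(v k)`
started from any `v 1`, one has for every `k ≥ 1`
`∑_{j=1}^k ‖v^j − T v^j‖²_{H⁻¹} ≤ (1/c) ‖v^1 − v*‖²_{H⁻¹}`. -/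
theorem preconditioned_mann_residual_sum {m : ℕ}
    (H : Matrix (Fin m) (Fin m) ℝ) (hH : H.PosDef)
    (heig : ∀ i, hH.1.eigenvalues i ∈ Set.Ioo (0:ℝ) 1)
    (T : EuclideanSpace ℝ (Fin m) → EuclideanSpace ℝ (Fin m))
    (hT : ∀ x y, ‖T x - T y‖ ≤ ‖x - y‖)
    (vstar : EuclideanSpace ℝ (Fin m)) (hfix : T vstar = vstar)
    (c : ℝ)
    (hc : IsLeast (Set.range fun j => hH.1.eigenvalues j * (1 - hH.1.eigenvalues j)) c)
    (v : ℕ → EuclideanSpace ℝ (Fin m))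
    (hrec : ∀ k, 1 ≤ k → v (k + 1) =
      (v k - Matrix.toEuclideanLin H (v k)) + Matrix.toEuclideanLin H (T (v k))) :
    ∀ k, 1 ≤ k →
      ∑ j ∈ Finset.Icc 1 k, wnormSq H (v j - T (v j)) ≤
        (1 / c) * wnormSq H (v 1 - vstar) := by
  set lam := hH.1.eigenvalues
  set B := hH.1.eigenvectorBasis
  have hP := hH.1.toEuclideanLin_eigenvectorBasis
  have hQ := hH.toEuclideanLin_inv_eigenvectorBasis
  have hc_pos : 0 < c := by
    obtain ⟨i, rfl⟩ := hc.1
    exact mul_pos (heig i).1 (sub_pos.2 (heig i).2)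
  have hspectral : ∀ r, ⟪r, Matrix.toEuclideanLin H r⟫ + c * wnormSq H r ≤ ‖r‖ ^ 2 :=
    B.inner_add_mul_inner_le_norm_sq hP hQ fun i => by
      have hci : c ≤ lam i * (1 - lam i) := hc.2 ⟨i, rfl⟩
      have hdiv : c * (lam i)⁻¹ ≤ 1 - lam i := by
        rw [← div_eq_mul_inv, div_le_iff₀ (heig i).1]
        linarith
      linarith
  have hstep : ∀ j, 1 ≤ j → wnormSq H (v (j + 1) - vstar) + c * wnormSq H (v j - T (v j)) ≤
      wnormSq H (v j - vstar) := fun j hj => by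
    rw [hrec j hj, sub_add, ← map_sub]
    exact preconditioned_step_descent (Matrix.isSymmetric_toEuclideanLin_iff.mpr hH.1.inv)
      (Matrix.toEuclideanLin_inv_apply_toEuclideanLin hH.det_pos.ne'.isUnit) hspectral hT hfix _
  have hnonneg : ∀ x, 0 ≤ wnormSq H x := fun x => by
    rw [wnormSq, B.inner_apply_self_of_apply_eq_smul hQ]
    exact sum_nonneg fun i _ => mul_nonneg (inv_nonneg.2 (heig i).1.le) (sq_nonneg _)
  exact fun k _ => sum_Icc_le_one_div_mul_of_descent (e := fun j => wnormSq H (v j - vstar))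
    hc_pos (fun j => hnonneg _) hstep k
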